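/- arXiv:1812.09249 — 4 statements merged into one kernel-verified Lean document; each statement's English description precedes it below -/
import Mathlib

section
/- Every symmetric FEN-hedonic game admits a Nash-stable coalition structure. (Proof idea: a coalition structure maximizing social welfare, i.e., the sum of all players' utilities, is Nash-stable, since any beneficial deviation of a single player strictly increases social welfare due to symmetry.) -/
open Finset

noncomputable def util {N : Type*} [DecidableEq N] (f e : ℝ)
    (friends enemies : N → Finset N) (i : N) (C : Finset N) : ℝ :=
  f * ((C ∩ friends i).card : ℝ) - e * ((C ∩ enemies i).card : ℝ)

noncomputable def wgt {N : Type*} [DecidableEq N] (f e : ℝ)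
    (friends enemies : N → Finset N) (i j : N) : ℝ :=
  (if j ∈ friends i then f else 0) - (if j ∈ enemies i then e else 0)

lemma util_eq_sum {N : Type*} [DecidableEq N] (f e : ℝ)
    (friends enemies : N → Finset N) (i : N) (C : Finset N) :
    util f e friends enemies i C = ∑ j ∈ C, wgt f e friends enemies i j := by
  unfold util wgt
  rw [Finset.sum_sub_distrib]
  congr 1
  · rw [Finset.sum_ite_mem, Finset.sum_const, nsmul_eq_mul, mul_comm]
  · rw [Finset.sum_ite_mem, Finset.sum_const, nsmul_eq_mul, mul_comm]

lemma wgt_symm {N : Type*} [DecidableEq N] (f e : ℝ)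
    (friends enemies : N → Finset N)
    (hsymF : ∀ i j, j ∈ friends i ↔ i ∈ friends j)
    (hsymE : ∀ i j, j ∈ enemies i ↔ i ∈ enemies j) (i j : N) :
    wgt f e friends enemies i j = wgt f e friends enemies j i := by
  unfold wgt
  rw [if_congr (hsymF i j) rfl rfl, if_congr (hsymE i j) rfl rfl]

/-- Every symmetric FEN-hedonic game admits a Nash-stable coalition structure. -/
theorem symmetric_fen_game_has_nash_stable
    {N : Type*} [Fintype N] [DecidableEq N]
    (f e : ℝ) (hf : 0 < f) (he : 0 < e)
    (friends enemies : N → Finset N)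
    (hdisj : ∀ k, Disjoint (friends k) (enemies k))
    (hfir : ∀ k, k ∉ friends k) (heir : ∀ k, k ∉ enemies k)
    (hsymF : ∀ i j, j ∈ friends i ↔ i ∈ friends j)
    (hsymE : ∀ i j, j ∈ enemies i ↔ i ∈ enemies j) :
    ∃ Γ : N → Finset N,
      (∀ i, i ∈ Γ i) ∧ (∀ i j, j ∈ Γ i → Γ j = Γ i) ∧
      ∀ (i : N) (C : Finset N), (C = ∅ ∨ ∃ j, C = Γ j) →
        util f e friends enemies i (Γ i) ≥ util f e friends enemies i (insert i C) := by
  classical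
  set W : N → N → ℝ := wgt f e friends enemies with hW
  have hWsymm : ∀ i j, W i j = W j i := wgt_symm f e friends enemies hsymF hsymE
  have hWself : ∀ i, W i i = 0 := by
    intro i; simp [hW, wgt, hfir i, heir i]
  set u : N → Finset N → ℝ := util f e friends enemies with hu
  have husum : ∀ i C, u i C = ∑ j ∈ C, W i j := fun i C => util_eq_sum f e friends enemies i C
  set P : (N → Finset N) → Prop := fun Γ => (∀ i, i ∈ Γ i) ∧ ∀ i j, j ∈ Γ i → Γ j = Γ i with hPdef
  set Φ : (N → Finset N) → ℝ := fun Γ => ∑ i, u i (Γ i) with hΦ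
  have hP0 : P (fun _ => (univ : Finset N)) := ⟨fun i => mem_univ i, fun _ _ _ => rfl⟩
  obtain ⟨Γ, hΓmem, hΓmax⟩ := Finset.exists_max_image (univ.filter fun Γ => P Γ) Φ
    ⟨_, mem_filter.2 ⟨mem_univ _, hP0⟩⟩
  obtain ⟨hmem, hclass⟩ : P Γ := (mem_filter.mp hΓmem).2
  refine ⟨Γ, hmem, hclass, ?_⟩
  intro i C hC
  by_contra hlt
  push_neg at hlt
  -- hlt : u i (Γ i) < u i (insert i C)
  have hiC : i ∉ C := by
    intro hiC
    rcases hC with rfl | ⟨j, rfl⟩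
    · exact absurd hiC (notMem_empty i)
    · have h1 : Γ i = Γ j := hclass j i hiC
      rw [insert_eq_self.mpr hiC, ← h1] at hlt
      exact lt_irrefl _ hlt
  have hCk : ∀ k ∈ C, Γ k = C := by
    rcases hC with rfl | ⟨j, rfl⟩
    · intro k hk; exact absurd hk (notMem_empty k)
    · exact fun k hk => hclass j k hk
  have hCA : Disjoint C (Γ i) := by
    rw [Finset.disjoint_left]
    intro k hkC hkA
    have h1 := hCk k hkC
    have h2 := hclass i k hkA
    have : i ∈ C := by rw [← h1, h2]; exact hmem i
    exact hiC this
  set B : Finset N := insert i C with hB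
  set δ : ℝ := u i B - u i (Γ i) with hδdef
  have hδ : 0 < δ := sub_pos.mpr hlt
  set Γ' : N → Finset N := fun k => if k ∈ B then B else (Γ k).erase i with hΓ'
  have hiB : i ∈ B := mem_insert_self i C
  have hPΓ' : P Γ' := by
    constructor
    · intro k
      by_cases hk : k ∈ B
      · simp [hΓ', hk]
      · have hki : k ≠ i := by rintro rfl; exact hk hiB
        simp [hΓ', hk, mem_erase, hki, hmem k]
    · intro k l hl
      by_cases hk : k ∈ B
      · simp only [hΓ', if_pos hk] at hl
        simp [hΓ', hl, hk]
      · simp only [hΓ', if_neg hk] at hl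
        obtain ⟨hli, hlk⟩ := mem_erase.mp hl
        have hlB : l ∉ B := by
          intro h
          rcases mem_insert.mp h with rfl | hlC
          · exact hli rfl
          · have h1 := hCk l hlC
            have h2 := hclass k l hlk
            rw [h1] at h2
            exact hk (mem_insert_of_mem (h2 ▸ hmem k))
        simp only [hΓ', if_neg hlB, if_neg hk]
        rw [hclass k l hlk]
  -- the per-player change
  set d : N → ℝ := fun k => (if k = i then δ else 0) + (if k ∈ C then W i k else 0)
      + (if k ∈ (Γ i).erase i then -(W i k) else 0) with hd
  have key : ∀ k, u k (Γ' k) = u k (Γ k) + d k := by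
    intro k
    by_cases hki : k = i
    · subst hki
      have h1 : k ∉ (Γ k).erase k := notMem_erase k (Γ k)
      simp only [hd, if_pos rfl, if_neg hiC, if_neg h1, hΓ', if_pos hiB, hδdef, if_true]
      ring
    · by_cases hkC : k ∈ C
      · have hkB : k ∈ B := mem_insert_of_mem hkC
        have hkA : k ∉ (Γ i).erase i := fun h =>
          (Finset.disjoint_left.mp hCA hkC) (mem_erase.mp h).2
        simp only [hd, if_neg hki, if_pos hkC, if_neg hkA, hΓ', if_pos hkB]
        rw [hCk k hkC, husum, hB, Finset.sum_insert hiC, ← husum, hWsymm i k]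
        ring
      · have hkB : k ∉ B := by
          intro h
          rcases mem_insert.mp h with rfl | h'
          · exact hki rfl
          · exact hkC h'
        by_cases hkA : k ∈ Γ i
        · have hkA' : k ∈ (Γ i).erase i := mem_erase.mpr ⟨hki, hkA⟩
          have hΓk : Γ k = Γ i := hclass i k hkA
          have hiΓk : i ∈ Γ k := hΓk ▸ hmem i
          simp only [hd, if_neg hki, if_neg hkC, if_pos hkA', hΓ', if_neg hkB]
          rw [husum, husum, ← Finset.sum_erase_add (Γ k) _ hiΓk, hWsymm i k]
          ring
        · have hiΓk : i ∉ Γ k := by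
            intro h
            have h2 := hclass k i h
            exact hkA (h2 ▸ hmem k)
          have hkA' : k ∉ (Γ i).erase i := fun h => hkA (mem_erase.mp h).2
          simp only [hd, if_neg hki, if_neg hkC, if_neg hkA', hΓ', if_neg hkB,
            Finset.erase_eq_of_notMem hiΓk]
          ring
  have hsumd : ∑ k, d k = 2 * δ := by
    simp only [hd]
    rw [Finset.sum_add_distrib, Finset.sum_add_distrib]
    rw [Finset.sum_ite_eq' univ i (fun _ => δ), if_pos (mem_univ i)]
    rw [Finset.sum_ite_mem, Finset.univ_inter, Finset.sum_ite_mem, Finset.univ_inter]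
    have h1 : ∑ k ∈ C, W i k = u i B := by
      rw [husum, hB, Finset.sum_insert hiC, hWself i, zero_add]
    have h2 : ∑ k ∈ (Γ i).erase i, -(W i k) = -(u i (Γ i)) := by
      rw [husum, ← Finset.sum_erase_add (Γ i) _ (hmem i), hWself i, add_zero,
        Finset.sum_neg_distrib]
    rw [h1, h2, hδdef]
    ring
  have hΦ' : Φ Γ' = Φ Γ + 2 * δ := by
    simp only [hΦ]
    rw [← hsumd, ← Finset.sum_add_distrib]
    exact Finset.sum_congr rfl fun k _ => key k
  have hle : Φ Γ' ≤ Φ Γ := hΓmax Γ' (mem_filter.2 ⟨mem_univ _, hPΓ'⟩)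
  rw [hΦ'] at hle
  linarith
end

section
/- In a symmetric FEN-hedonic game, if a player i strictly prefers joining a coalition C ∈ Γ ∪ {∅} (i.e., u_i(C ∪ {i}) > u_i(Γ(i))), then moving i from Γ(i) to C strictly increases the social welfare Σ_j u_j of the coalition structure. -/
/-!
When `i` joins a coalition `S`, each member `j` gains `u_j({i})`, and by symmetry of the friend
and enemy relations these gains add up to `u_i(S)`. So adding `i` to `S` raises the total utility
of the coalition by `2 u_i(S)`, and moving `i` from `Γ(i)` to `C` changes social welfare by
`2 (u_i(C ∪ {i}) - u_i(Γ(i)))`.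
-/

open Finset

theorem Finset.insert_union_erase_eq_union {α : Type*} [DecidableEq α] {i : α} {S T : Finset α}
    (hi : i ∈ T) : insert i S ∪ T.erase i = S ∪ T := by
  rw [insert_union, ← union_insert, insert_erase hi]

section FEN

variable {N : Type*} [DecidableEq N] {f e : ℝ} {friends enemies : N → Finset N}

theorem util_union {j : N} {S T : Finset N} (hST : Disjoint S T) :
    util f e friends enemies j (S ∪ T) =
      util f e friends enemies j S + util f e friends enemies j T := by
  have hcard : ∀ R : Finset N, #((S ∪ T) ∩ R) = #(S ∩ R) + #(T ∩ R) := fun R => by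
    rw [union_inter_distrib_right,
      card_union_of_disjoint (hST.mono inter_subset_left inter_subset_left)]
  simp only [util, hcard]
  push_cast
  ring

theorem util_insert {i j : N} {S : Finset N} (hi : i ∉ S) :
    util f e friends enemies j (insert i S) =
      util f e friends enemies j S + util f e friends enemies j {i} := by
  rw [insert_eq, union_comm, util_union (disjoint_singleton_right.mpr hi)]

theorem util_insert_self {i : N} (S : Finset N) (hfi : i ∉ friends i) (hei : i ∉ enemies i) :
    util f e friends enemies i (insert i S) = util f e friends enemies i S := by
  simp only [util, insert_inter_of_notMem hfi, insert_inter_of_notMem hei]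

theorem sum_card_singleton_inter_of_symm {R : N → Finset N} (hR : ∀ a b, b ∈ R a ↔ a ∈ R b)
    (i : N) (S : Finset N) : ∑ j ∈ S, #({i} ∩ R j) = #(S ∩ R i) := by
  simp only [singleton_inter, apply_ite card, card_singleton, card_empty]
  rw [← card_filter, ← filter_mem_eq_inter]
  simp only [hR i]

theorem sum_util_singleton_of_symm (hF : ∀ a b, b ∈ friends a ↔ a ∈ friends b)
    (hE : ∀ a b, b ∈ enemies a ↔ a ∈ enemies b) (i : N) (S : Finset N) :
    ∑ j ∈ S, util f e friends enemies j {i} = util f e friends enemies i S := by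
  simp only [util, sum_sub_distrib, ← mul_sum]
  rw [← sum_card_singleton_inter_of_symm hF, ← sum_card_singleton_inter_of_symm hE]
  push_cast
  rfl

variable (f e friends enemies) in
noncomputable def coalitionWelfare (S : Finset N) : ℝ :=
  ∑ j ∈ S, util f e friends enemies j S

theorem coalitionWelfare_eq_erase_add (hF : ∀ a b, b ∈ friends a ↔ a ∈ friends b)
    (hE : ∀ a b, b ∈ enemies a ↔ a ∈ enemies b) (hfF : ∀ k, k ∉ friends k)
    (heE : ∀ k, k ∉ enemies k) {i : N} {S : Finset N} (hi : i ∈ S) :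
    coalitionWelfare f e friends enemies S =
      coalitionWelfare f e friends enemies (S.erase i) + 2 * util f e friends enemies i S := by
  obtain ⟨T, hiT, rfl⟩ : ∃ T, i ∉ T ∧ S = insert i T :=
    ⟨S.erase i, notMem_erase i S, (insert_erase hi).symm⟩
  rw [erase_insert hiT, coalitionWelfare, coalitionWelfare, sum_insert hiT,
    util_insert_self T (hfF i) (heE i), sum_congr rfl fun j _ => util_insert hiT,
    sum_add_distrib, sum_util_singleton_of_symm hF hE]
  ring

theorem sum_util_eq_coalitionWelfare_add [Fintype N] {Γ : N → Finset N} {S T : Finset N}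
    (hST : Disjoint S T) (hS : ∀ j ∈ S, Γ j = S) (hT : ∀ j ∈ T, Γ j = T) :
    ∑ j, util f e friends enemies j (Γ j) =
      coalitionWelfare f e friends enemies S + coalitionWelfare f e friends enemies T +
        ∑ j ∈ (S ∪ T)ᶜ, util f e friends enemies j (Γ j) := by
  rw [← sum_add_sum_compl (S ∪ T), sum_union hST, coalitionWelfare, coalitionWelfare,
    sum_congr rfl fun j hj => congrArg _ (hS j hj), sum_congr rfl fun j hj => congrArg _ (hT j hj)]

end FEN

section Deviation

variable {N : Type*} [DecidableEq N]

def moveTo (Γ : N → Finset N) (i : N) (C : Finset N) : N → Finset N :=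
  fun j => if j = i ∨ j ∈ C then insert i C else if j ∈ Γ i then (Γ i).erase i else Γ j

variable {Γ : N → Finset N} {i j : N} {C : Finset N}

theorem moveTo_of_mem_insert (hj : j ∈ insert i C) : moveTo Γ i C j = insert i C :=
  if_pos (mem_insert.mp hj)

theorem moveTo_of_mem_erase (hCΓ : Disjoint C (Γ i)) (hj : j ∈ (Γ i).erase i) :
    moveTo Γ i C j = (Γ i).erase i := by
  have hjC : j ∉ C := disjoint_right.mp hCΓ (mem_of_mem_erase hj)
  simp only [moveTo, ne_of_mem_erase hj, hjC, or_self, if_false, if_pos (mem_of_mem_erase hj)]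

theorem moveTo_of_notMem (hi : i ∈ Γ i) (hj : j ∉ C ∪ Γ i) : moveTo Γ i C j = Γ j := by
  simp only [mem_union, not_or] at hj
  have hji : j ≠ i := fun h => hj.2 (h ▸ hi)
  simp only [moveTo, hji, hj.1, hj.2, or_self, if_false]

end Deviation

theorem nash_deviation_increases_social_welfare_general
    {N : Type*} [Fintype N] [DecidableEq N]
    (f e : ℝ)
    (friends enemies : N → Finset N)
    (hfir : ∀ k, k ∉ friends k) (heir : ∀ k, k ∉ enemies k)
    (hsymF : ∀ i j, j ∈ friends i ↔ i ∈ friends j)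
    (hsymE : ∀ i j, j ∈ enemies i ↔ i ∈ enemies j)
    (Γ : N → Finset N) (hmem : ∀ i, i ∈ Γ i) (hpart : ∀ i j, j ∈ Γ i → Γ j = Γ i)
    (i : N) (C : Finset N) (hC : C = ∅ ∨ ∃ k, C = Γ k) (hiC : i ∉ C)
    (hdev : util f e friends enemies i (insert i C) > util f e friends enemies i (Γ i)) :
    (∑ j : N, util f e friends enemies j
        (if j = i ∨ j ∈ C then insert i C else if j ∈ Γ i then (Γ i).erase i else Γ j))
      > ∑ j : N, util f e friends enemies j (Γ j) := by
  change ∑ j, util f e friends enemies j (moveTo Γ i C j) > _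
  have hΓC : ∀ j ∈ C, Γ j = C := by
    rcases hC with rfl | ⟨k, rfl⟩
    · simp
    · exact hpart k
  have hCΓ : Disjoint C (Γ i) := disjoint_left.mpr fun j hjC hjΓ =>
    hiC (hΓC j hjC ▸ hpart i j hjΓ ▸ hmem i)
  have hmoved : Disjoint (insert i C) ((Γ i).erase i) :=
    disjoint_insert_left.mpr ⟨notMem_erase i _, hCΓ.mono_right (erase_subset i _)⟩
  rw [sum_util_eq_coalitionWelfare_add hCΓ hΓC (hpart i),
    sum_util_eq_coalitionWelfare_add hmoved (fun _ => moveTo_of_mem_insert)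
      (fun _ => moveTo_of_mem_erase hCΓ),
    insert_union_erase_eq_union (hmem i),
    sum_congr rfl fun j hj => congrArg _ (moveTo_of_notMem (hmem i) (mem_compl.mp hj)),
    coalitionWelfare_eq_erase_add hsymF hsymE hfir heir (mem_insert_self i C), erase_insert hiC,
    coalitionWelfare_eq_erase_add hsymF hsymE hfir heir (hmem i)]
  linarith

/-- In a symmetric FEN-hedonic game, a beneficial Nash deviation of a single player
strictly increases social welfare. -/
theorem nash_deviation_increases_social_welfare
    {N : Type*} [Fintype N] [DecidableEq N]
    (f e : ℝ) (hf : 0 < f) (he : 0 < e)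
    (friends enemies : N → Finset N)
    (hdisj : ∀ k, Disjoint (friends k) (enemies k))
    (hfir : ∀ k, k ∉ friends k) (heir : ∀ k, k ∉ enemies k)
    (hsymF : ∀ i j, j ∈ friends i ↔ i ∈ friends j)
    (hsymE : ∀ i j, j ∈ enemies i ↔ i ∈ enemies j)
    (Γ : N → Finset N) (hmem : ∀ i, i ∈ Γ i) (hpart : ∀ i j, j ∈ Γ i → Γ j = Γ i)
    (i : N) (C : Finset N) (hC : C = ∅ ∨ ∃ k, C = Γ k) (hiC : i ∉ C)
    (hdev : util f e friends enemies i (insert i C) > util f e friends enemies i (Γ i)) :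
    (∑ j : N, util f e friends enemies j
        (if j = i ∨ j ∈ C then insert i C else if j ∈ Γ i then (Γ i).erase i else Γ j))
      > ∑ j : N, util f e friends enemies j (Γ j) :=
  nash_deviation_increases_social_welfare_general f e friends enemies hfir heir hsymF hsymE Γ hmem
    hpart i C hC hiC hdev
end

section
/- There exists a FEN-hedonic game with no perfect coalition structure: for the 3-player game with friend edges {1,2} and {2,3} and enemy edge {1,3} (symmetric relations, utility u_i(C) = f·|C ∩ N_i⁺| − e·|C ∩ N_i⁻| with f, e > 0), no partition Γ of {1,2,3} satisfies that every player's coalition is a favourite coalition. -/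
open Finset

/-- The 3-player FEN-hedonic game with friend edges {1,2}, {2,3} and enemy edge {1,3}
admits no perfect coalition structure. -/
theorem no_perfect_coalition_structure_example
    (f e : ℝ) (hf : 0 < f) (he : 0 < e) :
    ¬ ∃ Γ : Fin 3 → Finset (Fin 3),
        (∀ i, i ∈ Γ i) ∧ (∀ i j, j ∈ Γ i → Γ j = Γ i) ∧
        ∀ (i : Fin 3) (C : Finset (Fin 3)), i ∈ C →
          util f e (![{1}, {0, 2}, {1}]) (![{2}, ∅, {0}]) i (Γ i)
            ≥ util f e (![{1}, {0, 2}, {1}]) (![{2}, ∅, {0}]) i C := by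
  rintro ⟨Γ, hmem, hcoh, hfav⟩
  -- Player 0 compared with {0,1}
  have h0 := hfav 0 {0, 1} (by decide)
  have h1mem : (1 : Fin 3) ∈ Γ 0 ∧ (2 : Fin 3) ∉ Γ 0 := by
    by_contra h
    simp only [util, Matrix.cons_val_zero] at h0
    have e1 : (({0, 1} : Finset (Fin 3)) ∩ {1}).card = 1 := by decide
    have e2 : (({0, 1} : Finset (Fin 3)) ∩ {2}).card = 0 := by decide
    rw [e1, e2] at h0
    by_cases hm1 : (1 : Fin 3) ∈ Γ 0
    · have hm2 : (2 : Fin 3) ∈ Γ 0 := by tauto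
      have c1 : (Γ 0 ∩ {1}).card = 1 := by
        rw [Finset.inter_comm, Finset.singleton_inter_of_mem hm1]; simp
      have c2 : (Γ 0 ∩ {2}).card = 1 := by
        rw [Finset.inter_comm, Finset.singleton_inter_of_mem hm2]; simp
      rw [c1, c2] at h0
      push_cast at h0
      linarith
    · have c1 : (Γ 0 ∩ {1}).card = 0 := by
        rw [Finset.inter_comm, Finset.singleton_inter_of_notMem hm1]; simp
      rw [c1] at h0
      push_cast at h0
      have : (0:ℝ) ≤ e * ((Γ 0 ∩ {2}).card : ℝ) := by positivity
      linarith
  obtain ⟨h1in, h2out⟩ := h1mem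
  have hΓ1 : Γ 1 = Γ 0 := hcoh 0 1 h1in
  -- Player 1 compared with {0,1,2}
  have h1 := hfav 1 {0, 1, 2} (by decide)
  simp only [util, Matrix.cons_val_one, Matrix.head_cons, Matrix.cons_val_zero] at h1
  have e1 : (({0, 1, 2} : Finset (Fin 3)) ∩ {0, 2}).card = 2 := by decide
  have e2 : ∀ C : Finset (Fin 3), (C ∩ ∅).card = 0 := by simp
  rw [e1, e2, e2, hΓ1] at h1
  have hsub : Γ 0 ∩ {0, 2} ⊆ {0} := by
    intro x hx
    simp only [Finset.mem_inter, Finset.mem_insert, Finset.mem_singleton] at hx ⊢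
    rcases hx.2 with h | h
    · exact h
    · exact absurd (h ▸ hx.1) h2out
  have hcard : (Γ 0 ∩ {0, 2}).card ≤ 1 := by
    simpa using Finset.card_le_card hsub
  have : ((Γ 0 ∩ {0, 2}).card : ℝ) ≤ 1 := by exact_mod_cast hcard
  push_cast at h1
  nlinarith
end

section
/- A symmetric FEN-hedonic game (without coalition size bound) admits a perfect coalition structure if and only if no enemy edge connects two vertices in the same connected component of the friendship graph: i.e., there is no pair (u,v) ∈ E such that u and v are connected by a path of friend edges (including the trivial path, i.e., E restricted to friendship components is empty). -/
open Finset

/-- A symmetric FEN-hedonic game admits a perfect coalition structure iff no enemy edge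
connects two vertices in the same connected component of the friendship graph. -/
theorem perfect_structure_exists_iff_no_enemy_in_friend_component
    {N : Type*} [Fintype N] [DecidableEq N]
    (friends enemies : N → Finset N)
    (hdisj : ∀ k, Disjoint (friends k) (enemies k))
    (hfir : ∀ k, k ∉ friends k) (heir : ∀ k, k ∉ enemies k)
    (hsymF : ∀ i j, j ∈ friends i ↔ i ∈ friends j)
    (hsymE : ∀ i j, j ∈ enemies i ↔ i ∈ enemies j) :
    (∃ Γ : N → Finset N,
        (∀ i, i ∈ Γ i) ∧ (∀ i j, j ∈ Γ i → Γ j = Γ i) ∧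
        ∀ i, friends i ⊆ Γ i ∧ Γ i ∩ enemies i = ∅)
      ↔ ∀ u v : N, v ∈ enemies u →
          ¬ Relation.ReflTransGen (fun a b => b ∈ friends a) u v := by
  classical
  set R : N → N → Prop := fun a b => b ∈ friends a with hR
  have hsymR : Symmetric R := fun a b h => (hsymF a b).mp h
  constructor
  · rintro ⟨Γ, hmem, hcoh, hperf⟩ u v hv hreach
    have key : ∀ w, Relation.ReflTransGen R u w → Γ w = Γ u := by
      intro w hw
      induction hw with
      | refl => rfl
      | tail _ hbc ih =>
        rename_i b c _
        have hc : c ∈ Γ u := by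
          rw [← ih]; exact (hperf b).1 hbc
        exact (hcoh u c hc)
    have hvΓ : v ∈ Γ u := by
      have := key v hreach
      rw [← this]; exact hmem v
    have : v ∈ Γ u ∩ enemies u := Finset.mem_inter.mpr ⟨hvΓ, hv⟩
    rw [(hperf u).2] at this
    exact absurd this (Finset.notMem_empty v)
  · intro h
    refine ⟨fun i => Finset.univ.filter (fun j => Relation.ReflTransGen R i j), ?_, ?_, ?_⟩
    · intro i
      simp only [Finset.mem_filter, Finset.mem_univ, true_and]
      exact Relation.ReflTransGen.refl
    · intro i j hj
      simp only [Finset.mem_filter, Finset.mem_univ, true_and] at hj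
      ext k
      simp only [Finset.mem_filter, Finset.mem_univ, true_and]
      have hji : Relation.ReflTransGen R j i :=
        (@Relation.ReflTransGen.symmetric _ R ⟨fun a b h => hsymR h⟩).symm _ _ hj
      exact ⟨fun hk => hj.trans hk, fun hk => hji.trans hk⟩
    · intro i
      constructor
      · intro j hj
        simp only [Finset.mem_filter, Finset.mem_univ, true_and]
        exact Relation.ReflTransGen.single hj
      · ext j
        simp only [Finset.mem_inter, Finset.mem_filter, Finset.mem_univ, true_and,
          Finset.notMem_empty, iff_false]
        rintro ⟨hreach, hen⟩
        exact h i j hen hreach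
end
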